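/- arXiv:1106.0017 — 9 statements merged into one kernel-verified Lean document; each statement's English description precedes it below -/
import Mathlib

section
/- For every integer k ≥ 2, the graph H_k obtained from the complete bipartite graph K_{k,k} by deleting one vertex admits a proper total colouring with k+1 colours (i.e., an assignment of colours from {0,...,k} to the vertices and edges of H_k such that adjacent vertices, adjacent edges, and incident vertex–edge pairs receive distinct colours). -/
/-!
Index `X` and `Y` from `0`. Colour `x_i` with `i + 1`, every `y_j` with `0`, and the edge
`x_i y_j` with `1 + (i + j + 1) mod k`. The edge colours form a Latin rectangle on the colours
`1, …, k`, so edges at a common vertex differ; an edge avoids the colour `0` of its `Y`-end,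
and it avoids the colour of its `X`-end because `j + 1` is not divisible by `k` when `j + 1 < k`.
-/

open SimpleGraph

/-- A proper total colouring of `G` with `p` colours: vertex colours `cv`,
edge colours `ce` (symmetric on adjacent pairs); adjacent vertices, adjacent
edges and incident vertex-edge pairs get distinct colours. -/
def IsTotalColoring {V : Type*} (G : SimpleGraph V) (p : ℕ)
    (cv : V → Fin p) (ce : V → V → Fin p) : Prop :=
  (∀ u v, G.Adj u v → ce u v = ce v u) ∧
  (∀ u v, G.Adj u v → cv u ≠ cv v) ∧
  (∀ u v w, G.Adj u v → G.Adj u w → v ≠ w → ce u v ≠ ce u w) ∧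
  (∀ u v, G.Adj u v → ce u v ≠ cv u ∧ ce u v ≠ cv v)

/-- circular distance condition: `q ≤ |a - b| ≤ p - q`. -/
def circOk (p q a b : ℕ) : Prop :=
  q ≤ max a b - min a b ∧ max a b - min a b ≤ p - q

/-- A `(p,q)`-total colouring of `G`. -/
def IsCircTotalColoring {V : Type*} (G : SimpleGraph V) (p q : ℕ)
    (cv : V → ℕ) (ce : V → V → ℕ) : Prop :=
  (∀ v, cv v < p) ∧
  (∀ u v, G.Adj u v → ce u v < p) ∧
  (∀ u v, G.Adj u v → ce u v = ce v u) ∧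
  (∀ u v, G.Adj u v → circOk p q (cv u) (cv v)) ∧
  (∀ u v w, G.Adj u v → G.Adj u w → v ≠ w → circOk p q (ce u v) (ce u w)) ∧
  (∀ u v, G.Adj u v → circOk p q (ce u v) (cv u) ∧ circOk p q (ce u v) (cv v))

/-- The circular total chromatic number of `G`. -/
noncomputable def circTotalChromatic {V : Type*} (G : SimpleGraph V) : ℝ :=
  sInf {x : ℝ | ∃ p q : ℕ, 0 < q ∧
    (∃ cv ce, IsCircTotalColoring G p q cv ce) ∧ x = (p : ℝ) / q}

/-- The chain graph `G_{k,n}`: `n` blocks, each a copy of `K_{k,k-1}` with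
partite sets `Fin k` (the `X`-side) and `Fin (k-1)` (the `Y`-side); in block `i`
the designated link vertices are `x_i = (i, inl 0)` and `x'_i = (i, inl 1)`;
the extra vertex `u` is `none`, joined to `x'_1` and `x_n`, and `x_i` is joined
to `x'_{i+1}`. -/
def Gkn (k n : ℕ) : SimpleGraph (Option (Fin n × (Fin k ⊕ Fin (k - 1)))) :=
  SimpleGraph.fromRel (fun a b =>
    (∃ (i : Fin n) (x : Fin k) (y : Fin (k - 1)),
        a = some (i, Sum.inl x) ∧ b = some (i, Sum.inr y)) ∨
    (∃ (i j : Fin n) (x x' : Fin k), (j : ℕ) = (i : ℕ) + 1 ∧ (x : ℕ) = 0 ∧ (x' : ℕ) = 1 ∧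
        a = some (i, Sum.inl x) ∧ b = some (j, Sum.inl x')) ∨
    (∃ (i : Fin n) (x' : Fin k), (i : ℕ) = 0 ∧ (x' : ℕ) = 1 ∧
        a = none ∧ b = some (i, Sum.inl x')) ∨
    (∃ (i : Fin n) (x : Fin k), (i : ℕ) = n - 1 ∧ (x : ℕ) = 0 ∧
        a = some (i, Sum.inl x) ∧ b = none))

open Function

theorem completeBipartiteGraph_adj_induction {V W : Type*} {P : V ⊕ W → V ⊕ W → Prop}
    (inl_inr : ∀ v w, P (.inl v) (.inr w)) (inr_inl : ∀ v w, P (.inr w) (.inl v)) :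
    ∀ x y, (completeBipartiteGraph V W).Adj x y → P x y
  | .inl v, .inr w, _ => inl_inr v w
  | .inr w, .inl v, _ => inr_inl v w
  | .inl _, .inl _, h | .inr _, .inr _, h => by simp at h

namespace CompleteBipartite

variable {k m : ℕ}

def latin (i : Fin k) (j : Fin m) : Fin k :=
  ⟨(i + (j + 1)) % k, Nat.mod_lt _ i.pos⟩

lemma latin_left_injective (j : Fin m) : Injective fun i : Fin k => latin i j := by
  intro i i' h
  have h' : i + (j + 1) ≡ i' + (j + 1) [MOD k] := congrArg Fin.val h
  exact Fin.ext ((h'.add_right_cancel' _).eq_of_lt_of_lt i.isLt i'.isLt)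

lemma latin_right_injective (hm : m ≤ k) (i : Fin k) :
    Injective fun j : Fin m => latin i j := by
  intro j j' h
  have h' : i + (j + 1) ≡ i + (j' + 1) [MOD k] := congrArg Fin.val h
  exact Fin.ext (((h'.add_left_cancel' _).add_right_cancel' _).eq_of_lt_of_lt
    (by omega) (by omega))

lemma latin_ne (hm : m < k) (i : Fin k) (j : Fin m) : latin i j ≠ i := by
  intro h
  have h' : i + (j + 1) ≡ i + 0 [MOD k] :=
    (congrArg Fin.val h).trans (Nat.mod_eq_of_lt i.isLt).symm
  have := (h'.add_left_cancel' _).eq_of_lt_of_lt (by omega) i.pos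
  omega

def vertexColoring : Fin k ⊕ Fin m → Fin (k + 1) :=
  Sum.elim Fin.succ fun _ => 0

def edgeColoring : Fin k ⊕ Fin m → Fin k ⊕ Fin m → Fin (k + 1)
  | .inl i, .inr j | .inr j, .inl i => (latin i j).succ
  | _, _ => 0

theorem isTotalColoring (hm : m < k) :
    IsTotalColoring (completeBipartiteGraph (Fin k) (Fin m)) (k + 1)
      vertexColoring edgeColoring := by
  refine ⟨?_, ?_, ?_, ?_⟩
  · exact completeBipartiteGraph_adj_induction (fun _ _ => rfl) (fun _ _ => rfl)
  · exact completeBipartiteGraph_adj_induction (fun i _ => Fin.succ_ne_zero i)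
      (fun i _ => (Fin.succ_ne_zero i).symm)
  · intro u v w huv
    revert w
    refine completeBipartiteGraph_adj_induction (P := fun u v => ∀ w,
      (completeBipartiteGraph _ _).Adj u w → v ≠ w → edgeColoring u v ≠ edgeColoring u w)
      (fun i j => ?_) (fun i j => ?_) u v huv
    · rintro (i' | j') huw hne
      · simp at huw
      · exact fun h => hne (congrArg Sum.inr
          (latin_right_injective hm.le i (Fin.succ_injective _ h)))
    · rintro (i' | j') huw hne
      · exact fun h => hne (congrArg Sum.inl (latin_left_injective j (Fin.succ_injective _ h)))
      · simp at huw
  · exact completeBipartiteGraph_adj_induction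
      (fun i j => ⟨fun h => latin_ne hm i j (Fin.succ_injective _ h),
        Fin.succ_ne_zero (latin i j)⟩)
      (fun i j => ⟨Fin.succ_ne_zero (latin i j),
        fun h => latin_ne hm i j (Fin.succ_injective _ h)⟩)

end CompleteBipartite

theorem stmt0 (k : ℕ) (hk : 2 ≤ k) :
    ∃ (cv : Fin k ⊕ Fin (k - 1) → Fin (k + 1))
      (ce : (Fin k ⊕ Fin (k - 1)) → (Fin k ⊕ Fin (k - 1)) → Fin (k + 1)),
      IsTotalColoring (completeBipartiteGraph (Fin k) (Fin (k - 1))) (k + 1) cv ce :=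
  ⟨_, _, CompleteBipartite.isTotalColoring (by omega)⟩
end

section
/- Let k ≥ 2 and let c be a proper total colouring with k+1 colours of the graph H_k (K_{k,k} minus one vertex, with partite sets X = {x_1,...,x_k} of size k and Y = {y_2,...,y_k} of size k−1). Then all vertices of Y receive the same colour under c, and the vertices of X receive the remaining k colours, one each. -/
open SimpleGraph

open Finset

/-
A vertex `y ∈ Y` has degree `k`, so its `k` edges use every colour except the colour of `y`.
Hence, for each colour `a`, every `y` not coloured `a` meets an edge coloured `a`, whose other end
is a vertex of `X` not coloured `a`; as the edges coloured `a` form a matching, this gives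
`#{y | cv y ≠ a} ≤ #{x | cv x ≠ a}`, i.e. `#{x | cv x = a} ≤ #{y | cv y = a} + 1`. A colour used on
`X` is not used on `Y`, so it is used at most once on `X`. Then the `k` distinct colours of `X` avoid
all colours of `Y`, which leaves room for only one colour on `Y`.
-/

namespace IsTotalColoring

variable {V : Type*} {G : SimpleGraph V} {p : ℕ} {cv : V → Fin p} {ce : V → V → Fin p}

theorem exists_edge_color_eq {ι : Type*} [Fintype ι] (h : IsTotalColoring G p cv ce) {u : V}
    {f : ι → V} (hf : Function.Injective f) (hadj : ∀ i, G.Adj u (f i))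
    (hcard : Fintype.card ι + 1 = p) {c : Fin p} (hc : c ≠ cv u) :
    ∃ i, ce u (f i) = c := by
  have hinj : Function.Injective fun i ↦ ce u (f i) := fun i j hij ↦ by
    by_contra hne
    exact h.2.2.1 u _ _ (hadj i) (hadj j) (hf.ne hne) hij
  have himage : univ.image (fun i ↦ ce u (f i)) = univ.erase (cv u) := by
    refine eq_of_subset_of_card_le (fun a ha ↦ ?_) ?_
    · obtain ⟨i, -, rfl⟩ := mem_image.1 ha
      exact mem_erase.2 ⟨(h.2.2.2 u _ (hadj i)).1, mem_univ _⟩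
    · rw [card_image_of_injective _ hinj, card_erase_of_mem (mem_univ _), card_univ, card_univ,
        Fintype.card_fin]
      omega
  simpa using himage.ge (mem_erase.2 ⟨hc, mem_univ c⟩)

end IsTotalColoring

namespace completeBipartiteGraph

variable {α β : Type*} {p : ℕ} {cv : α ⊕ β → Fin p} {ce : α ⊕ β → α ⊕ β → Fin p}

theorem inl_color_ne_inr_color (h : IsTotalColoring (completeBipartiteGraph α β) p cv ce)
    (x : α) (y : β) : cv (.inl x) ≠ cv (.inr y) :=
  h.2.1 _ _ (by simp)

variable [Fintype α] [Fintype β]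

theorem card_inr_color_ne_le (h : IsTotalColoring (completeBipartiteGraph α β) p cv ce)
    (hp : Fintype.card α + 1 = p) (c : Fin p) :
    #{y | cv (.inr y) ≠ c} ≤ #{x | cv (.inl x) ≠ c} := by
  refine card_le_card_of_forall_subsingleton (fun y x ↦ ce (.inr y) (.inl x) = c)
    (fun y hy ↦ ?_) (fun x _ y₁ hy₁ y₂ hy₂ ↦ ?_)
  · obtain ⟨x, hx⟩ := h.exists_edge_color_eq Sum.inl_injective (u := .inr y) (by simp) hp
      (mem_filter.1 hy).2.symm
    exact ⟨x, mem_filter.2 ⟨mem_univ _, fun hcx ↦ (h.2.2.2 _ _ (by simp)).2 (hx.trans hcx.symm)⟩,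
      hx⟩
  · have hsym : ∀ y, ce (.inr y) (.inl x) = ce (.inl x) (.inr y) := fun y ↦ h.1 _ _ (by simp)
    by_contra hne
    refine h.2.2.1 (.inl x) (.inr y₁) (.inr y₂) (by simp) (by simp) (by simpa using hne) ?_
    rw [← hsym, ← hsym, hy₁.2, hy₂.2]

theorem card_inl_color_eq_le (h : IsTotalColoring (completeBipartiteGraph α β) p cv ce)
    (hp : Fintype.card α + 1 = p) (hαβ : Fintype.card α ≤ Fintype.card β + 1) (c : Fin p) :
    #{x | cv (.inl x) = c} ≤ #{y | cv (.inr y) = c} + 1 := by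
  have hα := card_filter_add_card_filter_not (s := univ) (fun x ↦ cv (.inl x) = c)
  have hβ := card_filter_add_card_filter_not (s := univ) (fun y ↦ cv (.inr y) = c)
  have := card_inr_color_ne_le h hp c
  simp only [card_univ, ← ne_eq] at hα hβ
  omega

theorem injective_inl_color (h : IsTotalColoring (completeBipartiteGraph α β) p cv ce)
    (hp : Fintype.card α + 1 = p) (hαβ : Fintype.card α ≤ Fintype.card β + 1) :
    Function.Injective fun x ↦ cv (.inl x) := fun x₁ x₂ hx ↦ by
  have hY : #{y | cv (.inr y) = cv (.inl x₁)} = 0 :=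
    card_eq_zero.2 <| filter_eq_empty_iff.2 fun y _ hy ↦ inl_color_ne_inr_color h x₁ y hy.symm
  have hX : #{x | cv (.inl x) = cv (.inl x₁)} ≤ 1 := by
    have := card_inl_color_eq_le h hp hαβ (cv (.inl x₁))
    omega
  exact card_le_one.1 hX _ (by simp) _ (by simp [← hx])

theorem inr_color_eq (h : IsTotalColoring (completeBipartiteGraph α β) p cv ce)
    (hp : Fintype.card α + 1 = p) (hαβ : Fintype.card α ≤ Fintype.card β + 1) (y₁ y₂ : β) :
    cv (.inr y₁) = cv (.inr y₂) := by
  by_contra hne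
  have hmaps : ∀ x ∈ (univ : Finset α),
      cv (.inl x) ∈ ({cv (.inr y₁), cv (.inr y₂)}ᶜ : Finset _) := fun x _ ↦ by
    simp [inl_color_ne_inr_color h x y₁, inl_color_ne_inr_color h x y₂]
  have hX := card_le_card_of_injOn _ hmaps (injective_inl_color h hp hαβ).injOn
  have hpair := card_le_univ ({cv (.inr y₁), cv (.inr y₂)} : Finset _)
  rw [card_compl, card_pair hne, Fintype.card_fin] at hX
  rw [card_pair hne, Fintype.card_fin] at hpair
  simp only [card_univ] at hX
  omega

end completeBipartiteGraph

theorem stmt1_general (k : ℕ)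
    (cv : Fin k ⊕ Fin (k - 1) → Fin (k + 1))
    (ce : (Fin k ⊕ Fin (k - 1)) → (Fin k ⊕ Fin (k - 1)) → Fin (k + 1))
    (h : IsTotalColoring (completeBipartiteGraph (Fin k) (Fin (k - 1))) (k + 1) cv ce) :
    (∀ j j' : Fin (k - 1), cv (Sum.inr j) = cv (Sum.inr j')) ∧
    Function.Injective (fun i : Fin k => cv (Sum.inl i)) ∧
    (∀ (i : Fin k) (j : Fin (k - 1)), cv (Sum.inl i) ≠ cv (Sum.inr j)) := by
  have hp : Fintype.card (Fin k) + 1 = k + 1 := by simp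
  have hXY : Fintype.card (Fin k) ≤ Fintype.card (Fin (k - 1)) + 1 := by
    simp only [Fintype.card_fin]; omega
  exact ⟨completeBipartiteGraph.inr_color_eq h hp hXY,
    completeBipartiteGraph.injective_inl_color h hp hXY,
    completeBipartiteGraph.inl_color_ne_inr_color h⟩

theorem stmt1 (k : ℕ) (hk : 2 ≤ k)
    (cv : Fin k ⊕ Fin (k - 1) → Fin (k + 1))
    (ce : (Fin k ⊕ Fin (k - 1)) → (Fin k ⊕ Fin (k - 1)) → Fin (k + 1))
    (h : IsTotalColoring (completeBipartiteGraph (Fin k) (Fin (k - 1))) (k + 1) cv ce) :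
    (∀ j j' : Fin (k - 1), cv (Sum.inr j) = cv (Sum.inr j')) ∧
    Function.Injective (fun i : Fin k => cv (Sum.inl i)) ∧
    (∀ (i : Fin k) (j : Fin (k - 1)), cv (Sum.inl i) ≠ cv (Sum.inr j)) :=
  stmt1_general k cv ce h
end

section
/- Let k ≥ 2 and let c be a proper total colouring with k+1 colours of H_k (K_{k,k} minus one vertex of the larger side, partite sets X of size k and Y of size k−1). Then for every vertex x ∈ X there is exactly one colour in {0,...,k} that does not appear on x or on any edge incident with x, and this missing colour is the same for all vertices of X, namely the common colour of the vertices in Y. -/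
open SimpleGraph

/-!
At a vertex `y ∈ Y` the `k + 1` colours of `y` and its edges are distinct, so every colour
other than that of `y` appears on an edge at `y`. If two vertices `x₁ ≠ x₂` of `X` had the same colour `c`, the edges
of colour `c` would then match `Y` injectively into `X \ {x₁, x₂}`, which is too small. So `X`
uses `k` distinct colours and misses exactly one colour `a`, which every vertex of `Y` (adjacent
to all of `X`) must carry. At `x ∈ X` the `k` colours of `x` and its edges avoid `a`, so they
are all colours except `a`.
-/

def incidentColors {V ι : Type*} {p : ℕ} (cv : V → Fin p) (ce : V → V → Fin p) (u : V)
    (f : ι → V) : Option ι → Fin p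
  | none => cv u
  | some i => ce u (f i)

theorem Function.Injective.exists_notMem_range_iff {ι C : Type*} [Fintype ι] [Fintype C]
    {f : ι → C} (hf : Function.Injective f) (hcard : Fintype.card ι + 1 = Fintype.card C) :
    ∃ a, ∀ b, b ∉ Set.range f ↔ b = a := by
  classical
  have hcompl : (Finset.univ.image f)ᶜ.card = 1 := by
    rw [Finset.card_compl, Finset.card_image_of_injective _ hf, Finset.card_univ]
    omega
  obtain ⟨a, ha⟩ := Finset.card_eq_one.1 hcompl
  refine ⟨a, fun b => ?_⟩
  rw [← Finset.mem_singleton, ← ha]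
  simp

namespace IsTotalColoring

section Incident

variable {V ι : Type*} {G : SimpleGraph V} {p : ℕ} {cv : V → Fin p} {ce : V → V → Fin p}
  {u : V} {f : ι → V}

theorem incidentColors_injective (h : IsTotalColoring G p cv ce) (hf : Function.Injective f)
    (hadj : ∀ i, G.Adj u (f i)) : Function.Injective (incidentColors cv ce u f) := by
  rintro (_ | i) (_ | j) hij
  · rfl
  · exact absurd hij.symm (h.2.2.2 _ _ (hadj j)).1
  · exact absurd hij (h.2.2.2 _ _ (hadj i)).1
  · by_contra hne
    exact h.2.2.1 _ _ _ (hadj i) (hadj j) (hf.ne (by simpa using hne)) hij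

theorem incidentColors_surjective [Fintype ι] (h : IsTotalColoring G p cv ce)
    (hf : Function.Injective f) (hadj : ∀ i, G.Adj u (f i)) (hp : Fintype.card ι + 1 = p) :
    Function.Surjective (incidentColors cv ce u f) :=
  ((Fintype.bijective_iff_injective_and_card _).2
    ⟨h.incidentColors_injective hf hadj, by simp [hp]⟩).2

end Incident

section CompleteBipartite

variable {α β : Type*} {p : ℕ} {cv : α ⊕ β → Fin p} {ce : α ⊕ β → α ⊕ β → Fin p}

theorem injective_comp_inl [Fintype α] [Fintype β]
    (h : IsTotalColoring (completeBipartiteGraph α β) p cv ce)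
    (hp : Fintype.card α + 1 = p) (hαβ : Fintype.card α ≤ Fintype.card β + 1) :
    Function.Injective (cv ∘ Sum.inl) := by
  classical
  intro x₁ x₂ hc
  simp only [Function.comp_apply] at hc
  by_contra hne
  have hmatch : ∀ y, ∃ x, ce (.inl x) (.inr y) = cv (.inl x₁) := by
    intro y
    obtain ⟨o, ho⟩ := h.incidentColors_surjective (u := .inr y) Sum.inl_injective (by simp) hp
      (cv (.inl x₁))
    cases o with
    | none => exact absurd ho (h.2.1 _ _ (by simp)).symm
    | some x => exact ⟨x, (h.1 _ _ (by simp)).trans ho⟩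
  choose φ hφ using hmatch
  have hφ_inj : Function.Injective φ := by
    intro y₁ y₂ he
    by_contra hne'
    exact h.2.2.1 (.inl (φ y₁)) (.inr y₁) (.inr y₂) (by simp) (by simp) (by simpa using hne')
      (by rw [hφ, he, hφ])
  have hφ_ne : ∀ y, φ y ≠ x₁ ∧ φ y ≠ x₂ := by
    intro y
    have hcol := (h.2.2.2 (.inl (φ y)) (.inr y) (by simp)).1
    rw [hφ] at hcol
    exact ⟨fun hy => hcol (by rw [hy]), fun hy => hcol (by rw [hy, hc])⟩
  have hcard := Finset.card_le_card_of_injOn (s := Finset.univ) (t := {x₁, x₂}ᶜ) φ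
    (fun y _ => by simpa [and_comm] using hφ_ne y) hφ_inj.injOn
  have htwo := Finset.card_le_univ {x₁, x₂}
  rw [Finset.card_compl, Finset.card_pair hne, Finset.card_univ] at hcard
  rw [Finset.card_pair hne] at htwo
  omega

theorem inr_notMem_range_comp_inl (h : IsTotalColoring (completeBipartiteGraph α β) p cv ce)
    (y : β) : cv (.inr y) ∉ Set.range (cv ∘ Sum.inl) := by
  rintro ⟨x, hx⟩
  exact h.2.1 (.inl x) (.inr y) (by simp) hx

end CompleteBipartite

end IsTotalColoring

theorem stmt2_general (k : ℕ)
    (cv : Fin k ⊕ Fin (k - 1) → Fin (k + 1))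
    (ce : (Fin k ⊕ Fin (k - 1)) → (Fin k ⊕ Fin (k - 1)) → Fin (k + 1))
    (h : IsTotalColoring (completeBipartiteGraph (Fin k) (Fin (k - 1))) (k + 1) cv ce) :
    ∃ a : Fin (k + 1), (∀ j : Fin (k - 1), cv (Sum.inr j) = a) ∧
      ∀ i : Fin k,
        {b : Fin (k + 1) | b ≠ cv (Sum.inl i) ∧
          ∀ j : Fin (k - 1), b ≠ ce (Sum.inl i) (Sum.inr j)} = {a} := by
  obtain ⟨a, ha⟩ := (h.injective_comp_inl (by rw [Fintype.card_fin])
    (by simp only [Fintype.card_fin]; omega)).exists_notMem_range_iff (by simp)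
  have hY : ∀ j, cv (.inr j) = a := fun j => (ha _).1 (h.inr_notMem_range_comp_inl j)
  refine ⟨a, hY, fun i => ?_⟩
  have hk : 1 ≤ k := i.pos
  obtain ⟨a', ha'⟩ := (h.incidentColors_injective (u := .inl i) Sum.inr_injective
    (by simp)).exists_notMem_range_iff
    (by simp only [Fintype.card_option, Fintype.card_fin]; omega)
  have ha_notMem : a ∉ Set.range (incidentColors cv ce (.inl i) Sum.inr) := by
    rintro ⟨_ | j, hj⟩
    · exact (ha a).2 rfl ⟨i, hj⟩
    · exact (h.2.2.2 _ _ (by simp)).2 (hj.trans (hY j).symm)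
  ext b
  rw [Set.mem_singleton_iff, (ha' a).1 ha_notMem, ← ha' b]
  simp [Set.range, incidentColors, Option.exists, eq_comm]

theorem stmt2 (k : ℕ) (hk : 2 ≤ k)
    (cv : Fin k ⊕ Fin (k - 1) → Fin (k + 1))
    (ce : (Fin k ⊕ Fin (k - 1)) → (Fin k ⊕ Fin (k - 1)) → Fin (k + 1))
    (h : IsTotalColoring (completeBipartiteGraph (Fin k) (Fin (k - 1))) (k + 1) cv ce) :
    ∃ a : Fin (k + 1), (∀ j : Fin (k - 1), cv (Sum.inr j) = a) ∧
      ∀ i : Fin k,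
        {b : Fin (k + 1) | b ≠ cv (Sum.inl i) ∧
          ∀ j : Fin (k - 1), b ≠ ce (Sum.inl i) (Sum.inr j)} = {a} :=
  stmt2_general k cv ce h
end

section
/- Let k ≥ 2 and let c be a proper total colouring with k+1 colours of H_k with partite sets X of size k and Y of size k−1. Then the set of edges receiving any fixed colour that appears on some vertex of X forms a perfect matching between Y and the vertices of X not having that colour; in particular, the edges coloured c(x_1) form a matching saturating Y. -/
open SimpleGraph

theorem stmt3 (k : ℕ) (hk : 2 ≤ k)
    (cv : Fin k ⊕ Fin (k - 1) → Fin (k + 1))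
    (ce : (Fin k ⊕ Fin (k - 1)) → (Fin k ⊕ Fin (k - 1)) → Fin (k + 1))
    (h : IsTotalColoring (completeBipartiteGraph (Fin k) (Fin (k - 1))) (k + 1) cv ce)
    (i₀ : Fin k) :
    (∀ j : Fin (k - 1), ∃! i : Fin k, ce (Sum.inl i) (Sum.inr j) = cv (Sum.inl i₀)) ∧
    (∀ (i : Fin k) (j j' : Fin (k - 1)),
        ce (Sum.inl i) (Sum.inr j) = cv (Sum.inl i₀) →
        ce (Sum.inl i) (Sum.inr j') = cv (Sum.inl i₀) → j = j') ∧
    (∀ i : Fin k,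
        (∃ j : Fin (k - 1), ce (Sum.inl i) (Sum.inr j) = cv (Sum.inl i₀)) ↔
          cv (Sum.inl i) ≠ cv (Sum.inl i₀)) := by
  obtain ⟨hsym, hvv, hee, hev⟩ := h
  have adj : ∀ (i : Fin k) (j : Fin (k-1)),
      (completeBipartiteGraph (Fin k) (Fin (k - 1))).Adj (Sum.inl i) (Sum.inr j) := by
    intro i j; simp [completeBipartiteGraph]
  set α := cv (Sum.inl i₀) with hα
  have key : ∀ j : Fin (k - 1), ∃! i : Fin k, ce (Sum.inl i) (Sum.inr j) = α := by
    intro j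
    set F : Option (Fin k) → Fin (k+1) := fun o =>
      o.elim (cv (Sum.inr j)) (fun i => ce (Sum.inr j) (Sum.inl i)) with hF
    have hinj : Function.Injective F := by
      rintro (_|a) (_|b) hab
      · rfl
      · exact absurd hab.symm (hev _ _ ((adj b j).symm)).1
      · exact absurd hab (hev _ _ ((adj a j).symm)).1
      · simp only [Option.some.injEq]
        by_contra hne
        exact hee _ _ _ ((adj a j).symm) ((adj b j).symm)
          (by simpa using hne) hab
    have hsurj : Function.Surjective F :=
      ((Fintype.bijective_iff_injective_and_card F).2 ⟨hinj, by simp⟩).2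
    obtain ⟨o, ho⟩ := hsurj α
    cases o with
    | none =>
      have ho' : cv (Sum.inr j) = α := ho
      exact absurd ho'.symm (hvv _ _ (adj i₀ j))
    | some i =>
      have ho' : ce (Sum.inr j) (Sum.inl i) = α := ho
      have hgoal : ce (Sum.inl i) (Sum.inr j) = α := by
        rw [← hsym _ _ ((adj i j))] at ho'
        exact ho'
      refine ⟨i, hgoal, ?_⟩
      intro i' hi'
      have : F (some i') = F (some i) := by
        show ce (Sum.inr j) (Sum.inl i') = ce (Sum.inr j) (Sum.inl i)
        rw [hsym _ _ ((adj i' j).symm), hsym _ _ ((adj i j).symm), hi', hgoal]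
      exact Option.some.inj (hinj this)
  have part2 : ∀ (i : Fin k) (j j' : Fin (k - 1)),
      ce (Sum.inl i) (Sum.inr j) = α → ce (Sum.inl i) (Sum.inr j') = α → j = j' := by
    intro i j j' h1 h2
    by_contra hne
    exact hee _ _ _ (adj i j) (adj i j') (by simpa using hne) (h1.trans h2.symm)
  have fwd : ∀ (i : Fin k) (j : Fin (k-1)),
      ce (Sum.inl i) (Sum.inr j) = α → cv (Sum.inl i) ≠ α := by
    intro i j hj hcv
    exact (hev _ _ (adj i j)).1 (hj.trans hcv.symm)
  refine ⟨key, part2, ?_⟩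
  intro i
  constructor
  · rintro ⟨j, hj⟩; exact fwd i j hj
  · intro hne
    by_contra hno
    push_neg at hno
    set f : Fin (k-1) → Fin k := fun j => (key j).choose with hf
    have hfs : ∀ j, ce (Sum.inl (f j)) (Sum.inr j) = α := fun j => (key j).choose_spec.1
    have hfinj : Function.Injective f := by
      intro j j' hjj
      exact part2 (f j) j j' (hfs j) (hjj ▸ hfs j')
    have hmem : ∀ j : Fin (k-1), f j ∈ (({i₀, i} : Finset (Fin k))ᶜ) := by
      intro j
      simp only [Finset.mem_compl, Finset.mem_insert, Finset.mem_singleton]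
      push_neg
      constructor
      · intro hc; exact fwd (f j) j (hfs j) (by rw [hc])
      · intro hc; exact hno j (hc ▸ hfs j)
    have hii : i₀ ≠ i := fun hc => hne (hc ▸ rfl)
    have hcard := Finset.card_le_card_of_injOn (s := Finset.univ)
      (t := ({i₀, i} : Finset (Fin k))ᶜ) f (fun a _ => hmem a)
      (Function.Injective.injOn hfinj)
    rw [Finset.card_univ, Fintype.card_fin, Finset.card_compl] at hcard
    rw [Finset.card_insert_of_notMem (by simpa using hii),
      Finset.card_singleton, Fintype.card_fin] at hcard
    omega
end

section
/- Let k ≥ 2 and n ≥ 1, and let G_{k,n} be the chain graph built from n copies B_1,...,B_n of K_{k,k} minus a vertex (each copy retaining two designated link vertices x_i, x'_i from the size-k side) together with one extra vertex u, where u is joined to x'_1 and x_n, and x_i is joined to x'_{i+1} for 1 ≤ i ≤ n−1. Then G_{k,n} admits no proper total colouring with k+1 colours. -/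
open SimpleGraph

open Finset

lemma adjXY {k n : ℕ} (i : Fin n) (x : Fin k) (y : Fin (k-1)) :
    (Gkn k n).Adj (some (i, Sum.inl x)) (some (i, Sum.inr y)) := by
  rw [Gkn, SimpleGraph.fromRel_adj]
  exact ⟨by simp, Or.inl (Or.inl ⟨i, x, y, rfl, rfl⟩)⟩

lemma adjLink {k n : ℕ} (i j : Fin n) (hij : (j:ℕ) = (i:ℕ) + 1) (x x' : Fin k)
    (hx : (x:ℕ) = 0) (hx' : (x':ℕ) = 1) :
    (Gkn k n).Adj (some (i, Sum.inl x)) (some (j, Sum.inl x')) := by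
  rw [Gkn, SimpleGraph.fromRel_adj]
  refine ⟨?_, Or.inl (Or.inr (Or.inl ⟨i, j, x, x', hij, hx, hx', rfl, rfl⟩))⟩
  intro h
  simp only [Option.some.injEq, Prod.mk.injEq] at h
  have : (i:ℕ) = (j:ℕ) := by rw [h.1]
  omega

lemma adjU {k n : ℕ} (i : Fin n) (x' : Fin k) (hi : (i:ℕ) = 0) (hx' : (x':ℕ) = 1) :
    (Gkn k n).Adj none (some (i, Sum.inl x')) := by
  rw [Gkn, SimpleGraph.fromRel_adj]
  exact ⟨by simp, Or.inl (Or.inr (Or.inr (Or.inl ⟨i, x', hi, hx', rfl, rfl⟩)))⟩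

lemma adjUn {k n : ℕ} (i : Fin n) (x : Fin k) (hi : (i:ℕ) = n - 1) (hx : (x:ℕ) = 0) :
    (Gkn k n).Adj (some (i, Sum.inl x)) none := by
  rw [Gkn, SimpleGraph.fromRel_adj]
  exact ⟨by simp, Or.inl (Or.inr (Or.inr (Or.inr ⟨i, x, hi, hx, rfl, rfl⟩)))⟩

/-- left outside-neighbour of block `i` -/
def Lv (k n : ℕ) (hk : 2 ≤ k) (i : ℕ) (hI : i < n) : Option (Fin n × (Fin k ⊕ Fin (k-1))) :=
  if i = 0 then none else some (⟨i-1, by omega⟩, Sum.inl ⟨0, by omega⟩)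

/-- right outside-neighbour of block `i` -/
def Rv (k n : ℕ) (hk : 2 ≤ k) (i : ℕ) : Option (Fin n × (Fin k ⊕ Fin (k-1))) :=
  if h : i + 1 < n then some (⟨i+1, h⟩, Sum.inl ⟨1, by omega⟩) else none

lemma adjL {k n : ℕ} (hk : 2 ≤ k) (i : ℕ) (hI : i < n) :
    (Gkn k n).Adj (some (⟨i, hI⟩, Sum.inl ⟨1, by omega⟩)) (Lv k n hk i hI) := by
  unfold Lv
  split_ifs with h0
  · subst h0
    exact (adjU ⟨0, hI⟩ ⟨1, by omega⟩ rfl rfl).symm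
  · exact (adjLink ⟨i-1, by omega⟩ ⟨i, hI⟩ (by simp; omega) ⟨0, by omega⟩ ⟨1, by omega⟩
      rfl rfl).symm

lemma adjR {k n : ℕ} (hk : 2 ≤ k) (i : ℕ) (hI : i < n) :
    (Gkn k n).Adj (some (⟨i, hI⟩, Sum.inl ⟨0, by omega⟩)) (Rv k n hk i) := by
  unfold Rv
  split_ifs with h
  · exact adjLink ⟨i, hI⟩ ⟨i+1, h⟩ rfl ⟨0, by omega⟩ ⟨1, by omega⟩ rfl rfl
  · exact adjUn ⟨i, hI⟩ ⟨0, by omega⟩ (by simp; omega) rfl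

lemma neL {k n : ℕ} (hk : 2 ≤ k) (i : ℕ) (hI : i < n) (y : Fin (k-1)) :
    Lv k n hk i hI ≠ some (⟨i, hI⟩, Sum.inr y) := by
  unfold Lv
  split_ifs <;> simp

lemma neR {k n : ℕ} (hk : 2 ≤ k) (i : ℕ) (hI : i < n) (y : Fin (k-1)) :
    Rv k n hk i ≠ some (⟨i, hI⟩, Sum.inr y) := by
  unfold Rv
  split_ifs <;> simp

lemma block_lemma {k : ℕ} (hk : 2 ≤ k)
    (cvx : Fin k → Fin (k+1)) (cvy : Fin (k-1) → Fin (k+1))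
    (E : Fin k → Fin (k-1) → Fin (k+1))
    (hxy : ∀ x y, cvx x ≠ cvy y)
    (hEx : ∀ x, Function.Injective (E x))
    (hEy : ∀ y, Function.Injective (fun x => E x y))
    (hEvx : ∀ x y, E x y ≠ cvx x)
    (hEvy : ∀ x y, E x y ≠ cvy y)
    (a b : Fin k) (p q : Fin (k+1))
    (hpa : p ≠ cvx a) (hpE : ∀ y, p ≠ E a y)
    (hqb : q ≠ cvx b) (hqE : ∀ y, q ≠ E b y) :
    p = q := by
  classical
  set S : Fin k → Finset (Fin (k+1)) :=
    fun x => insert (cvx x) (Finset.image (E x) Finset.univ) with hS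
  have hims : ∀ x, (Finset.image (E x) Finset.univ).card = k - 1 := by
    intro x
    rw [Finset.card_image_of_injective _ (hEx x), Finset.card_univ, Fintype.card_fin]
  have hcvne : ∀ x, cvx x ∉ Finset.image (E x) Finset.univ := by
    intro x hmem
    obtain ⟨y, -, hy⟩ := Finset.mem_image.mp hmem
    exact hEvx x y hy
  have hScard : ∀ x, (S x).card = k := by
    intro x
    rw [hS, Finset.card_insert_of_notMem (hcvne x), hims]
    omega
  have hcompl : ∀ x, ∃ m, (S x)ᶜ = {m} := by
    intro x
    apply Finset.card_eq_one.mp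
    rw [Finset.card_compl, hScard, Fintype.card_fin]
    omega
  choose m hm using hcompl
  have hmem : ∀ x c, c ∉ S x ↔ c = m x := by
    intro x c
    rw [← Finset.mem_compl, hm, Finset.mem_singleton]
  have hmx : ∀ x, m x ∉ S x := by
    intro x; rw [hmem]
  have hmcv : ∀ x, m x ≠ cvx x := by
    intro x h
    exact hmx x (by rw [hS]; simp [h])
  have hmE : ∀ x y, m x ≠ E x y := by
    intro x y h
    apply hmx x
    rw [hS]
    exact Finset.mem_insert_of_mem (Finset.mem_image.mpr ⟨y, Finset.mem_univ y, h.symm⟩)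
  have hpm : p = m a := by
    rw [← hmem]
    simp only [hS, Finset.mem_insert, Finset.mem_image, not_or]
    exact ⟨hpa, fun ⟨y, _, hy⟩ => hpE y hy.symm⟩
  have hqm : q = m b := by
    rw [← hmem]
    simp only [hS, Finset.mem_insert, Finset.mem_image, not_or]
    exact ⟨hqb, fun ⟨y, _, hy⟩ => hqE y hy.symm⟩
  rw [hpm, hqm]
  by_contra hab
  -- counting
  set A : Fin (k+1) → ℕ := fun c => (Finset.univ.filter (fun x => cvx x = c)).card with hA
  set B : Fin (k+1) → ℕ := fun c => (Finset.univ.filter (fun y => cvy y = c)).card with hB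
  set M : Fin (k+1) → ℕ := fun c => (Finset.univ.filter (fun x => m x = c)).card with hM
  -- per-y filter counts
  have h1 : ∀ (c : Fin (k+1)) (y : Fin (k-1)),
      (Finset.univ.filter (fun x => E x y = c)).card = if cvy y = c then 0 else 1 := by
    intro c y
    split_ifs with hc
    · rw [Finset.card_eq_zero, Finset.filter_eq_empty_iff]
      intro x _
      rw [← hc]
      exact hEvy x y
    · -- c is in the image of fun x => E x y
      have himy : (Finset.image (fun x => E x y) Finset.univ).card = k := by
        rw [Finset.card_image_of_injective _ (hEy y), Finset.card_univ, Fintype.card_fin]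
      have hins : insert (cvy y) (Finset.image (fun x => E x y) Finset.univ) = Finset.univ := by
        apply Finset.eq_univ_of_card
        rw [Finset.card_insert_of_notMem, himy, Fintype.card_fin]
        intro hmem2
        obtain ⟨x, -, hx⟩ := Finset.mem_image.mp hmem2
        exact hEvy x y hx
      have : c ∈ insert (cvy y) (Finset.image (fun x => E x y) Finset.univ) := by
        rw [hins]; exact Finset.mem_univ c
      rcases Finset.mem_insert.mp this with h | h
      · exact absurd h.symm hc
      · obtain ⟨x0, -, hx0⟩ := Finset.mem_image.mp h
        rw [Finset.card_eq_one]
        refine ⟨x0, ?_⟩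
        ext x
        simp only [Finset.mem_filter, Finset.mem_univ, true_and, Finset.mem_singleton]
        constructor
        · intro h'
          exact hEy y (by simpa using h'.trans hx0.symm)
        · intro h'; rw [h', hx0]
  have h2 : ∀ (c : Fin (k+1)) (x : Fin k),
      (Finset.univ.filter (fun y => E x y = c)).card
        = if cvx x = c ∨ m x = c then 0 else 1 := by
    intro c x
    split_ifs with hc
    · rw [Finset.card_eq_zero, Finset.filter_eq_empty_iff]
      intro y _
      rcases hc with h | h
      · rw [← h]; exact hEvx x y
      · rw [← h]; exact fun he => hmE x y he.symm
    · push_neg at hc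
      have hins : insert (m x) (S x) = Finset.univ := by
        apply Finset.eq_univ_of_card
        rw [Finset.card_insert_of_notMem (hmx x), hScard, Fintype.card_fin]
      have : c ∈ insert (m x) (S x) := by rw [hins]; exact Finset.mem_univ c
      rcases Finset.mem_insert.mp this with h | h
      · exact absurd h.symm hc.2
      · rw [hS] at h
        rcases Finset.mem_insert.mp h with h | h
        · exact absurd h.symm hc.1
        · obtain ⟨y0, -, hy0⟩ := Finset.mem_image.mp h
          rw [Finset.card_eq_one]
          refine ⟨y0, ?_⟩
          ext y
          simp only [Finset.mem_filter, Finset.mem_univ, true_and, Finset.mem_singleton]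
          constructor
          · intro h'
            exact hEx x (h'.trans hy0.symm)
          · intro h'; rw [h', hy0]
  have key : ∀ c, A c + M c = B c + 1 := by
    intro c
    have swap : ∑ y : Fin (k-1), (Finset.univ.filter (fun x => E x y = c)).card
        = ∑ x : Fin k, (Finset.univ.filter (fun y => E x y = c)).card := by
      simp only [Finset.card_filter]
      exact Finset.sum_comm
    rw [Finset.sum_congr rfl (fun y _ => h1 c y),
        Finset.sum_congr rfl (fun x _ => h2 c x)] at swap
    have hBle : (∑ y : Fin (k-1), if cvy y = c then (0:ℕ) else 1) + B c = k - 1 := by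
      simp only [hB]
      rw [Finset.card_filter, ← Finset.sum_add_distrib]
      have : ∀ y : Fin (k-1), ((if cvy y = c then (0:ℕ) else 1) + if cvy y = c then 1 else 0) = 1 := by
        intro y; split_ifs <;> rfl
      rw [Finset.sum_congr rfl (fun y _ => this y), Finset.sum_const, Finset.card_univ,
        Fintype.card_fin, smul_eq_mul, mul_one]
    have hAMle : (∑ x : Fin k, if cvx x = c ∨ m x = c then (0:ℕ) else 1) + (A c + M c) = k := by
      simp only [hA, hM]
      rw [Finset.card_filter, Finset.card_filter, ← Finset.sum_add_distrib, ← Finset.sum_add_distrib]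
      have : ∀ x : Fin k, ((if cvx x = c ∨ m x = c then (0:ℕ) else 1)
          + ((if cvx x = c then 1 else 0) + if m x = c then 1 else 0)) = 1 := by
        intro x
        rcases eq_or_ne (cvx x) c with h | h
        · have : m x ≠ c := fun h' => hmcv x (h'.trans h.symm)
          simp [h, this]
        · rcases eq_or_ne (m x) c with h' | h'
          · simp [h, h']
          · simp [h, h']
      rw [Finset.sum_congr rfl (fun x _ => this x), Finset.sum_const, Finset.card_univ,
        Fintype.card_fin, smul_eq_mul, mul_one]
    omega
  have hAB : ∀ c, A c ≠ 0 → B c = 0 := by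
    intro c hAc
    by_contra hBc
    obtain ⟨x, hx⟩ := Finset.card_pos.mp (Nat.pos_of_ne_zero hAc)
    obtain ⟨y, hy⟩ := Finset.card_pos.mp (Nat.pos_of_ne_zero hBc)
    simp only [hA, Finset.mem_filter] at hx
    simp only [hB, Finset.mem_filter] at hy
    exact hxy x y (hx.2.trans hy.2.symm)
  have hA1 : ∀ c, A c ≤ 1 := by
    intro c
    rcases Nat.eq_zero_or_pos (A c) with h | h
    · omega
    · have := hAB c (by omega)
      have := key c
      omega
  have hMA : ∀ c, M c ≠ 0 → A c = 0 := by
    intro c hMc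
    by_contra hAc
    have h0 := hAB c hAc
    have := key c
    omega
  have hMa : M (m a) ≠ 0 := by
    simp only [hM]
    exact Finset.card_ne_zero_of_mem (a := a) (by simp)
  have hMb : M (m b) ≠ 0 := by
    simp only [hM]
    exact Finset.card_ne_zero_of_mem (a := b) (by simp)
  -- sum of A over all colors is k
  have hsumA : ∑ c : Fin (k+1), A c = k := by
    simp only [hA]
    rw [← Finset.card_eq_sum_card_fiberwise (fun x _ => Finset.mem_univ (cvx x))]
    simp
  have hpair : ({m a, m b} : Finset (Fin (k+1))) ⊆ Finset.univ := Finset.subset_univ _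
  have hsplit := Finset.sum_sdiff (f := A) hpair
  have hpairsum : ∑ c ∈ ({m a, m b} : Finset (Fin (k+1))), A c = 0 := by
    rw [Finset.sum_pair hab]
    rw [hMA (m a) hMa, hMA (m b) hMb]
  have hbound : ∑ c ∈ Finset.univ \ ({m a, m b} : Finset (Fin (k+1))), A c
      ≤ (Finset.univ \ ({m a, m b} : Finset (Fin (k+1)))).card := by
    calc ∑ c ∈ Finset.univ \ ({m a, m b} : Finset (Fin (k+1))), A c
        ≤ ∑ _c ∈ Finset.univ \ ({m a, m b} : Finset (Fin (k+1))), 1 :=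
          Finset.sum_le_sum (fun c _ => hA1 c)
      _ = _ := by simp
  have hcard2 : (Finset.univ \ ({m a, m b} : Finset (Fin (k+1)))).card = k - 1 := by
    rw [Finset.card_sdiff_of_subset hpair, Finset.card_univ, Fintype.card_fin, Finset.card_pair hab]
    omega
  omega

theorem stmt9 (k n : ℕ) (hk : 2 ≤ k) (hn : 1 ≤ n) :
    ¬ ∃ (cv : Option (Fin n × (Fin k ⊕ Fin (k - 1))) → Fin (k + 1))
        (ce : Option (Fin n × (Fin k ⊕ Fin (k - 1))) →
              Option (Fin n × (Fin k ⊕ Fin (k - 1))) → Fin (k + 1)),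
      IsTotalColoring (Gkn k n) (k + 1) cv ce := by
  rintro ⟨cv, ce, hsym, hvv, hee, hve⟩
  have hn0 : 0 < n := hn
  have hk0 : (0:ℕ) < k := by omega
  have hk1 : (1:ℕ) < k := by omega
  -- the per-block step
  have step : ∀ i (hI : i < n),
      ce (some (⟨i, hI⟩, Sum.inl ⟨1, hk1⟩)) (Lv k n hk i hI)
        = ce (some (⟨i, hI⟩, Sum.inl ⟨0, hk0⟩)) (Rv k n hk i) := by
    intro i hI
    set I : Fin n := ⟨i, hI⟩ with hIdef
    apply block_lemma hk
      (cvx := fun x => cv (some (I, Sum.inl x)))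
      (cvy := fun y => cv (some (I, Sum.inr y)))
      (E := fun x y => ce (some (I, Sum.inl x)) (some (I, Sum.inr y)))
      (a := ⟨1, hk1⟩) (b := ⟨0, hk0⟩)
    · exact fun x y => hvv _ _ (adjXY I x y)
    · intro x y1 y2 h
      by_contra hne
      exact hee _ _ _ (adjXY I x y1) (adjXY I x y2) (by simpa using hne) h
    · intro y x1 x2 h
      simp only at h
      rw [hsym _ _ (adjXY I x1 y), hsym _ _ (adjXY I x2 y)] at h
      by_contra hne
      exact hee _ _ _ (adjXY I x1 y).symm (adjXY I x2 y).symm (by simpa using hne) h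
    · exact fun x y => (hve _ _ (adjXY I x y)).1
    · exact fun x y => (hve _ _ (adjXY I x y)).2
    · exact (hve _ _ (adjL hk i hI)).1
    · exact fun y => hee _ _ _ (adjL hk i hI) (adjXY I ⟨1, hk1⟩ y) (neL hk i hI y)
    · exact (hve _ _ (adjR hk i hI)).1
    · exact fun y => hee _ _ _ (adjR hk i hI) (adjXY I ⟨0, hk0⟩ y) (neR hk i hI y)
  -- the chain invariant
  have chain : ∀ i (hI : i < n),
      ce none (some (⟨0, hn0⟩, Sum.inl ⟨1, hk1⟩))
        = ce (some (⟨i, hI⟩, Sum.inl ⟨0, hk0⟩)) (Rv k n hk i) := by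
    intro i
    induction i with
    | zero =>
      intro hI
      have h := step 0 hI
      rw [show Lv k n hk 0 hI = none from by unfold Lv; simp] at h
      rw [← h]
      exact hsym _ _ (adjU ⟨0, hI⟩ ⟨1, hk1⟩ rfl rfl)
    | succ i ih =>
      intro hI
      have hI' : i < n := by omega
      have e1 := ih hI'
      rw [show Rv k n hk i = some (⟨i+1, hI⟩, Sum.inl ⟨1, by omega⟩) from by
        unfold Rv; exact dif_pos hI] at e1
      have e2 := step (i+1) hI
      rw [show Lv k n hk (i+1) hI = some (⟨i, hI'⟩, Sum.inl ⟨0, by omega⟩) from by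
        unfold Lv; rw [if_neg (by omega)]; simp] at e2
      rw [e1, ← e2]
      exact hsym _ _ (adjLink ⟨i, hI'⟩ ⟨i+1, hI⟩ rfl ⟨0, by omega⟩ ⟨1, by omega⟩ rfl rfl)
  have h := chain (n-1) (by omega)
  rw [show Rv k n hk (n-1) = none from by unfold Rv; exact dif_neg (by omega)] at h
  rw [hsym _ _ (adjUn ⟨n-1, by omega⟩ ⟨0, hk0⟩ (by simp) rfl)] at h
  exact hee none (some (⟨0, hn0⟩, Sum.inl ⟨1, hk1⟩)) (some (⟨n-1, by omega⟩, Sum.inl ⟨0, hk0⟩))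
    (adjU _ _ rfl rfl) ((adjUn _ _ (by simp) rfl).symm)
    (by simp) h
end

section
/- Let k ≥ 2 and n ≥ 1. The graph G_{k,n} (a cyclic chain of n copies of K_{k,k} minus a vertex, linked through a single extra vertex u as described) admits an (n(k+1)+1, n)-total colouring. Hence its circular total chromatic number satisfies χ''_c(G_{k,n}) ≤ k + 1 + 1/n. -/
open SimpleGraph

/-!
Write a colour as `c * n + r` with level `c ≤ k` and offset `r ≤ n`. Modulo `p = (k + 1) n + 1`,
two such colours are at circular distance at least `n` when their levels differ by two or more, or
by one with the larger offset on the higher level; between levels `k` and `0` the offset on level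
`k` may exceed the one on level `0` by at most one, which is what the extra colour in `p` pays for.

Block `B_i` works at offset `i + 1`. The edge from the `a`-th vertex of `X_i` to the `b`-th vertex
of `Y_i` gets the class `(a + b + 1) mod k`, a proper edge colouring of `K_{k,k-1}` that misses
class `a` at the `a`-th vertex of `X_i`; that vertex then takes the level `classLevel a` of its
missing class. Level `1` is left for `Y_i` and for the link edges, `x_i x'_{i+1}` at offset `i + 1`
(so the two edges at `u` get offsets `0` and `n`), and class-`0` edges go to level `0` at offset
`i`, below the link edge at `x'_i`.
-/

theorem circOk.symm {p q a b : ℕ} (h : circOk p q a b) : circOk p q b a := by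
  unfold circOk at *
  omega

def gridColour (n c r : ℕ) : ℕ := c * n + r

theorem gridColour_lt {k n c r : ℕ} (hc : c ≤ k) (hr : r ≤ n) :
    gridColour n c r < n * (k + 1) + 1 := by
  have : c * n ≤ k * n := Nat.mul_le_mul_right n hc
  unfold gridColour
  linarith

theorem circOk_gridColour_of_le {k n c c' r r' : ℕ} (hc : c ≤ k) (hr : r ≤ n) (hr' : r' ≤ n)
    (hsep : c' + 1 < c ∨ c' < c ∧ r' ≤ r ∨ c' = c ∧ r' + n ≤ r)
    (hwrap : c < c' + k ∨ r ≤ r' + 1) :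
    circOk (n * (k + 1) + 1) n (gridColour n c r) (gridColour n c' r') := by
  obtain ⟨d, rfl⟩ : ∃ d, c = c' + d := ⟨c - c', by omega⟩
  have hp : n * (k + 1) = k * n + n := by ring
  have hdk : d * n ≤ k * n := Nat.mul_le_mul_right n (by omega)
  have hd : d = 0 ∨ d = 1 ∨ n + n ≤ d * n := by
    rcases Nat.lt_or_ge d 2 with h | h
    · omega
    · exact Or.inr (Or.inr (by nlinarith))
  have hdk' : d < k → d * n + n ≤ k * n := fun h => by nlinarith
  unfold circOk gridColour
  rw [Nat.add_mul, hp]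
  rcases hd with rfl | rfl | hd <;> constructor <;> omega

theorem circOk_gridColour {k n c c' r r' : ℕ} (hc : c ≤ k) (hc' : c' ≤ k) (hr : r ≤ n)
    (hr' : r' ≤ n)
    (h : ((c' + 1 < c ∨ c' < c ∧ r' ≤ r ∨ c' = c ∧ r' + n ≤ r) ∧ (c < c' + k ∨ r ≤ r' + 1)) ∨
      ((c + 1 < c' ∨ c < c' ∧ r ≤ r' ∨ c = c' ∧ r + n ≤ r') ∧ (c' < c + k ∨ r' ≤ r + 1))) :
    circOk (n * (k + 1) + 1) n (gridColour n c r) (gridColour n c' r') := by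
  rcases h with ⟨hsep, hwrap⟩ | ⟨hsep, hwrap⟩
  · exact circOk_gridColour_of_le hc hr hr' hsep hwrap
  · exact (circOk_gridColour_of_le hc' hr' hr hsep hwrap).symm

theorem circTotalChromatic_le {V : Type*} {G : SimpleGraph V} {p q : ℕ} (hq : 0 < q)
    {cv : V → ℕ} {ce : V → V → ℕ} (h : IsCircTotalColoring G p q cv ce) :
    circTotalChromatic G ≤ p / q :=
  csInf_le ⟨0, by rintro _ ⟨p, q, -, -, rfl⟩; positivity⟩ ⟨p, q, hq, ⟨cv, ce, h⟩, rfl⟩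

namespace Gkn

abbrev Vertex (k n : ℕ) := Option (Fin n × (Fin k ⊕ Fin (k - 1)))

def IsEdge (k n : ℕ) : Vertex k n → Vertex k n → Prop
  | none, some (i, .inl a) | some (i, .inl a), none =>
      (i : ℕ) = 0 ∧ (a : ℕ) = 1 ∨ (i : ℕ) = n - 1 ∧ (a : ℕ) = 0
  | some (i, .inl a), some (j, .inl b) =>
      (a : ℕ) = 0 ∧ (b : ℕ) = 1 ∧ (j : ℕ) = i + 1 ∨ (a : ℕ) = 1 ∧ (b : ℕ) = 0 ∧ (i : ℕ) = j + 1
  | some (i, .inl _), some (j, .inr _) | some (j, .inr _), some (i, .inl _) => i = j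
  | _, _ => False

variable {k n : ℕ}

theorem adj_iff {u v : Vertex k n} : (Gkn k n).Adj u v ↔ IsEdge k n u v := by
  rcases u with _ | ⟨i, a | b⟩ <;> rcases v with _ | ⟨j, a' | b'⟩ <;> simp [Gkn, IsEdge] <;> omega

def blockClass (k a b : ℕ) : ℕ := (a + b + 1) % k

theorem blockClass_lt (hk : 0 < k) (a b : ℕ) : blockClass k a b < k := Nat.mod_lt _ hk

theorem blockClass_ne_self {a b : ℕ} (ha : a < k) (hb : b + 1 < k) : blockClass k a b ≠ a := by
  unfold blockClass
  rcases Nat.lt_or_ge (a + b + 1) k with h | h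
  · rw [Nat.mod_eq_of_lt h]; omega
  · rw [Nat.mod_eq_sub_mod h, Nat.mod_eq_of_lt (by omega)]; omega

theorem blockClass_left_injective {a a' b : ℕ} (ha : a < k) (ha' : a' < k)
    (h : blockClass k a b = blockClass k a' b) : a = a' := by
  unfold blockClass at h
  rw [add_assoc, add_assoc] at h
  have := Nat.ModEq.add_right_cancel' (b + 1) h
  rwa [Nat.ModEq, Nat.mod_eq_of_lt ha, Nat.mod_eq_of_lt ha'] at this

theorem blockClass_right_injective {a b b' : ℕ} (hb : b < k) (hb' : b' < k)
    (h : blockClass k a b = blockClass k a b') : b = b' := by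
  unfold blockClass at h
  rw [add_comm a b, add_comm a b'] at h
  exact blockClass_left_injective hb hb' h

def classLevel (c : ℕ) : ℕ := if c = 0 then 0 else c + 1

def blockEdgeColour (k n i a b : ℕ) : ℕ :=
  if blockClass k a b = 0 then gridColour n 0 i
  else gridColour n (blockClass k a b + 1) (i + 1)

def vertexColour (k n : ℕ) : Vertex k n → ℕ
  | none => gridColour n 0 0
  | some (i, .inl a) => gridColour n (classLevel a) (i + 1)
  | some (i, .inr _) => gridColour n 1 (i + 1)

/-- The link edge `x_i x'_{i+1}` gets offset `i + 1` from either end, `x_i` and `x'_{i+1}` having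
index `0` and `1` in their blocks. -/
def edgeColour (k n : ℕ) : Vertex k n → Vertex k n → ℕ
  | some (i, .inl a), some (_, .inr b) | some (_, .inr b), some (i, .inl a) =>
      blockEdgeColour k n i a b
  | some (i, .inl a), _ | _, some (i, .inl a) => gridColour n 1 (i + 1 - a)
  | _, _ => 0

theorem blockEdgeColour_lt {i a b : ℕ} (hk : 0 < k) (hi : i < n) :
    blockEdgeColour k n i a b < n * (k + 1) + 1 := by
  have := blockClass_lt hk a b
  unfold blockEdgeColour
  split_ifs <;> apply gridColour_lt <;> omega

theorem circOk_blockEdgeColour_classLevel {i a b : ℕ} (hi : i < n) (ha : a < k)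
    (hb : b + 1 < k) :
    circOk (n * (k + 1) + 1) n (blockEdgeColour k n i a b)
      (gridColour n (classLevel a) (i + 1)) := by
  have := blockClass_lt (k := k) (by omega) a b
  have := blockClass_ne_self ha hb
  unfold blockEdgeColour classLevel
  split_ifs <;> apply circOk_gridColour <;> omega

theorem circOk_blockEdgeColour_gridColour_one {i a b r : ℕ} (hk : 0 < k) (hi : i < n)
    (hr : i ≤ r) (hr' : r ≤ i + 1) :
    circOk (n * (k + 1) + 1) n (blockEdgeColour k n i a b) (gridColour n 1 r) := by
  have := blockClass_lt hk a b
  unfold blockEdgeColour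
  split_ifs <;> apply circOk_gridColour <;> omega

theorem circOk_blockEdgeColour_blockEdgeColour {i a b a' b' : ℕ} (hk : 0 < k) (hi : i < n)
    (h : blockClass k a b ≠ blockClass k a' b') :
    circOk (n * (k + 1) + 1) n (blockEdgeColour k n i a b) (blockEdgeColour k n i a' b') := by
  have := blockClass_lt hk a b
  have := blockClass_lt hk a' b'
  unfold blockEdgeColour
  split_ifs <;> apply circOk_gridColour <;> omega

theorem vertexColour_lt (v : Vertex k n) : vertexColour k n v < n * (k + 1) + 1 := by
  rcases v with _ | ⟨i, a | b⟩ <;> simp only [vertexColour, classLevel]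
  · apply gridColour_lt <;> omega
  · split_ifs <;> apply gridColour_lt <;> omega
  · have := b.isLt
    apply gridColour_lt <;> omega

theorem edgeColour_lt {u v : Vertex k n} (h : (Gkn k n).Adj u v) :
    edgeColour k n u v < n * (k + 1) + 1 := by
  rw [adj_iff] at h
  rcases u with _ | ⟨i, a | b⟩ <;> rcases v with _ | ⟨j, a' | b'⟩ <;> simp only [IsEdge] at h <;>
    simp only [edgeColour]
  · apply gridColour_lt <;> omega
  · apply gridColour_lt <;> omega
  · apply gridColour_lt <;> omega
  · exact blockEdgeColour_lt a.pos i.isLt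
  · exact blockEdgeColour_lt a'.pos j.isLt

theorem edgeColour_comm {u v : Vertex k n} (h : (Gkn k n).Adj u v) :
    edgeColour k n u v = edgeColour k n v u := by
  rw [adj_iff] at h
  rcases u with _ | ⟨i, a | b⟩ <;> rcases v with _ | ⟨j, a' | b'⟩ <;> simp only [IsEdge] at h <;>
    simp only [edgeColour]
  unfold gridColour
  omega

theorem circOk_vertexColour {u v : Vertex k n} (h : (Gkn k n).Adj u v) :
    circOk (n * (k + 1) + 1) n (vertexColour k n u) (vertexColour k n v) := by
  rw [adj_iff] at h
  rcases u with _ | ⟨i, a | b⟩ <;> rcases v with _ | ⟨j, a' | b'⟩ <;> simp only [IsEdge] at h <;>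
    simp only [vertexColour, classLevel] <;> split_ifs <;> apply circOk_gridColour <;> omega

theorem circOk_edgeColour_vertexColour (hk : 2 ≤ k) {u v : Vertex k n}
    (h : (Gkn k n).Adj u v) :
    circOk (n * (k + 1) + 1) n (edgeColour k n u v) (vertexColour k n u) := by
  rw [adj_iff] at h
  rcases u with _ | ⟨i, a | b⟩ <;> rcases v with _ | ⟨j, a' | b'⟩ <;> simp only [IsEdge] at h <;>
    simp only [edgeColour, vertexColour]
  · apply circOk_gridColour <;> omega
  · unfold classLevel
    split_ifs <;> apply circOk_gridColour <;> omega
  · unfold classLevel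
    split_ifs <;> apply circOk_gridColour <;> omega
  · exact circOk_blockEdgeColour_classLevel i.isLt a.isLt (by omega)
  · exact circOk_blockEdgeColour_gridColour_one (by omega) j.isLt (by omega) (by omega)

theorem circOk_edgeColour_edgeColour {u v w : Vertex k n} (hv : (Gkn k n).Adj u v)
    (hw : (Gkn k n).Adj u w) (hvw : v ≠ w) :
    circOk (n * (k + 1) + 1) n (edgeColour k n u v) (edgeColour k n u w) := by
  rw [adj_iff] at hv hw
  rcases u with _ | ⟨i, a | b⟩ <;> rcases v with _ | ⟨j, a' | b'⟩ <;> simp only [IsEdge] at hv <;>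
    rcases w with _ | ⟨l, a'' | b''⟩ <;> simp only [IsEdge] at hw <;>
    simp only [ne_eq, Option.some.injEq, Prod.mk.injEq, Fin.ext_iff, Sum.inl.injEq, Sum.inr.injEq,
      not_and, not_true_eq_false] at hvw <;>
    simp only [edgeColour]
  · apply circOk_gridColour <;> omega
  -- here and in the next two `omega` cases, `u` would have two neighbours outside its block
  · omega
  · exact (circOk_blockEdgeColour_gridColour_one (by omega) i.isLt (by omega) (by omega)).symm
  · omega
  · omega
  · exact (circOk_blockEdgeColour_gridColour_one (by omega) i.isLt (by omega) (by omega)).symm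
  · exact circOk_blockEdgeColour_gridColour_one (by omega) i.isLt (by omega) (by omega)
  · exact circOk_blockEdgeColour_gridColour_one (by omega) i.isLt (by omega) (by omega)
  · subst hv hw
    refine circOk_blockEdgeColour_blockEdgeColour (by omega) i.isLt fun h => hvw rfl ?_
    exact blockClass_right_injective (by omega) (by omega) h
  · subst hv hw
    refine circOk_blockEdgeColour_blockEdgeColour (by omega) (Fin.isLt _) fun h => hvw rfl ?_
    exact blockClass_left_injective a'.isLt a''.isLt h

theorem isCircTotalColoring (hk : 2 ≤ k) :
    IsCircTotalColoring (Gkn k n) (n * (k + 1) + 1) n (vertexColour k n) (edgeColour k n) :=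
  ⟨vertexColour_lt, fun _ _ => edgeColour_lt, fun _ _ => edgeColour_comm,
    fun _ _ => circOk_vertexColour, fun _ _ _ => circOk_edgeColour_edgeColour,
    fun _ _ h => ⟨circOk_edgeColour_vertexColour hk h,
      edgeColour_comm h ▸ circOk_edgeColour_vertexColour hk h.symm⟩⟩

end Gkn

theorem stmt10 (k n : ℕ) (hk : 2 ≤ k) (hn : 1 ≤ n) :
    (∃ cv ce, IsCircTotalColoring (Gkn k n) (n * (k + 1) + 1) n cv ce) ∧
    circTotalChromatic (Gkn k n) ≤ (k : ℝ) + 1 + 1 / n := by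
  have hcol := Gkn.isCircTotalColoring (n := n) hk
  refine ⟨⟨_, _, hcol⟩, ?_⟩
  calc circTotalChromatic (Gkn k n)
      ≤ ((n * (k + 1) + 1 : ℕ) : ℝ) / n := circTotalChromatic_le hn hcol
    _ = k + 1 + 1 / n := by field_simp; push_cast; ring
end

section
/- Let k ≥ 2 and q ≥ 1. The graph H obtained from K_{k,k−1} (parts X = {x_1,...,x_k}, Y = {y_2,...,y_k}) admits a (q(k+1)+1, q)-total colouring γ together with values at two 'half-edge slots' at x_k and x_1 such that γ assigns 0 to the slot at x_k, 2 to the slot at x_1, γ(x_k) = qk+1, γ(x_1) = q+2, and the slot value at each x_i differs circularly by at least q from γ(x_i) and from γ(x_i y_j) for all j. -/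
open SimpleGraph

/-!
Colour every element by a level `m ∈ [0, k]` and an offset `e ∈ {0, 1, 2}`, i.e. by `q m + e` mod
`p = q(k+1)+1`. Two such colours are at circular distance at least `q` once their levels differ and
the offset does not drop between adjacent levels (with one extra condition for levels `0` and `k`).
Put every `y_j` at level `0`, `x_i` at level `i + 1` and the edge `x_i y_j` at level
`(i + j + 1) mod k + 1`: the levels at each vertex form a Latin-square pattern, and the offsets
increase with the level along every row and column. The half-edge slots are the level-`0` colours
`0` and `2`.
-/

theorem circOk_comm {p q a b : ℕ} : circOk p q a b ↔ circOk p q b a := by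
  unfold circOk
  rw [max_comm, min_comm]

section Bipartite

variable {α β : Type*}

def bipartiteEdgeColoring (c : α → β → ℕ) : α ⊕ β → α ⊕ β → ℕ
  | Sum.inl a, Sum.inr b => c a b
  | Sum.inr b, Sum.inl a => c a b
  | _, _ => 0

theorem isCircTotalColoring_completeBipartiteGraph {p q : ℕ} {f : α → ℕ} {g : β → ℕ}
    {c : α → β → ℕ} (hf : ∀ a, f a < p) (hg : ∀ b, g b < p) (hc : ∀ a b, c a b < p)
    (hfg : ∀ a b, circOk p q (f a) (g b))
    (hrow : ∀ a b b', b ≠ b' → circOk p q (c a b) (c a b'))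
    (hcol : ∀ a a' b, a ≠ a' → circOk p q (c a b) (c a' b))
    (hcf : ∀ a b, circOk p q (c a b) (f a)) (hcg : ∀ a b, circOk p q (c a b) (g b)) :
    IsCircTotalColoring (completeBipartiteGraph α β) p q (Sum.elim f g)
      (bipartiteEdgeColoring c) := by
  refine ⟨?_, ?_, ?_, ?_, ?_, ?_⟩
  · rintro (a | b)
    exacts [hf a, hg b]
  · rintro (a | b) (a' | b') h <;> simp at h
    exacts [hc a b', hc a' b]
  · rintro (a | b) (a' | b') - <;> rfl
  · rintro (a | b) (a' | b') h <;> simp at h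
    exacts [hfg a b', circOk_comm.1 (hfg a' b)]
  · rintro (a | b) (a' | b') (a'' | b'') h h' hne <;> simp at h h' hne
    exacts [hrow a b' b'' hne, hcol a' a'' b hne]
  · rintro (a | b) (a' | b') h <;> simp at h
    exacts [⟨hcf a b', hcg a b'⟩, ⟨hcg a' b, hcf a' b⟩]

end Bipartite

/-- Levels are `q` apart; when `q = 1` the top value `q * k + 2 = p` wraps around to `0`. -/
def levelColor (q k m e : ℕ) : ℕ := (q * m + e) % (q * (k + 1) + 1)

section Color

variable {q k m m' e e' : ℕ}

theorem levelColor_lt : levelColor q k m e < q * (k + 1) + 1 :=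
  Nat.mod_lt _ (by omega)

theorem levelColor_eq_of_lt (h : q * m + e < q * (k + 1) + 1) : levelColor q k m e = q * m + e :=
  Nat.mod_eq_of_lt h

/-- As `q ≥ 1`, the linear bounds on `m + e` force the gap `q (m - m') + e - e'` to lie between `q`
and `p - q`. -/
theorem circOk_levelColor (hq : 1 ≤ q) (hm : m ≤ k) (he : e ≤ 2) (hlt : m' < m)
    (hlow : e' + m' < e + m) (hup : e + m ≤ e' + m' + k + 1) :
    circOk (q * (k + 1) + 1) q (levelColor q k m e) (levelColor q k m' e') := by
  obtain ⟨t, rfl⟩ : ∃ t, m = m' + t + 1 := ⟨m - m' - 1, by omega⟩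
  have hqk : q * (m' + t + 1) ≤ q * k := Nat.mul_le_mul_left q hm
  have hshort : t + 2 ≤ k → q * (t + 2) ≤ q * k := Nat.mul_le_mul_left q
  have ht : t ≤ q * t := Nat.le_mul_of_pos_left t hq
  have hexp₁ : q * (m' + t + 1) = q * m' + q * t + q := by ring
  have hexp₂ : q * (t + 2) = q * t + 2 * q := by ring
  have hexp₃ : q * (k + 1) = q * k + q := by ring
  unfold levelColor
  rcases lt_or_ge (q * (m' + t + 1) + e) (q * (k + 1) + 1) with hsmall | hwrap
  · rw [Nat.mod_eq_of_lt hsmall, Nat.mod_eq_of_lt (by omega)]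
    unfold circOk
    omega
  · obtain rfl : q = 1 := by omega
    have hfull : 1 * (m' + t + 1) + e = 1 * (k + 1) + 1 := by omega
    rw [hfull, Nat.mod_self, Nat.mod_eq_of_lt (by omega)]
    unfold circOk
    omega

theorem circOk_levelColor' (hq : 1 ≤ q) (hm : m ≤ k) (hm' : m' ≤ k) (he : e ≤ 2)
    (he' : e' ≤ 2)
    (h : (m' < m ∧ e' + m' < e + m ∧ e + m ≤ e' + m' + k + 1) ∨
      (m < m' ∧ e + m < e' + m' ∧ e' + m' ≤ e + m + k + 1)) :
    circOk (q * (k + 1) + 1) q (levelColor q k m e) (levelColor q k m' e') := by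
  rcases h with ⟨hlt, hlow, hup⟩ | ⟨hlt, hlow, hup⟩
  · exact circOk_levelColor hq hm he hlt hlow hup
  · exact circOk_comm.1 (circOk_levelColor hq hm' he' hlt hlow hup)

theorem levelColor_zero_left (h : e < q * (k + 1) + 1) : levelColor q k 0 e = e := by
  simpa using levelColor_eq_of_lt (m := 0) (by simpa using h)

end Color

namespace HalfEdgeColoring

def xColor (q k i : ℕ) : ℕ := levelColor q k (i + 1) (if i + 2 ≤ k then 2 else 1)

def yColor (q k : ℕ) : ℕ := levelColor q k 0 1

/-- The edge `x_i y_j` sits at level `(i + j + 1) mod k + 1`, so the levels at each `x_i` and each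
`y_j` are all distinct; its offset is `2` before the wraparound and `1` after it. -/
def edgeColor (q k i j : ℕ) : ℕ :=
  if i + j + 2 ≤ k then levelColor q k (i + j + 2) 2 else levelColor q k (i + j + 2 - k) 1

variable {q k i i' j j' : ℕ}

theorem edgeColor_lt : edgeColor q k i j < q * (k + 1) + 1 := by
  unfold edgeColor
  split_ifs <;> exact levelColor_lt

theorem circOk_xColor_yColor (hq : 1 ≤ q) (hi : i < k) :
    circOk (q * (k + 1) + 1) q (xColor q k i) (yColor q k) := by
  unfold xColor yColor
  split_ifs <;> apply circOk_levelColor' hq <;> omega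

theorem circOk_edgeColor_row (hq : 1 ≤ q) (hi : i < k) (hj : j < k - 1) (hj' : j' < k - 1)
    (hne : j ≠ j') :
    circOk (q * (k + 1) + 1) q (edgeColor q k i j) (edgeColor q k i j') := by
  unfold edgeColor
  split_ifs <;> apply circOk_levelColor' hq <;> omega

theorem circOk_edgeColor_col (hq : 1 ≤ q) (hi : i < k) (hi' : i' < k) (hj : j < k - 1)
    (hne : i ≠ i') :
    circOk (q * (k + 1) + 1) q (edgeColor q k i j) (edgeColor q k i' j) := by
  unfold edgeColor
  split_ifs <;> apply circOk_levelColor' hq <;> omega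

theorem circOk_edgeColor_xColor (hq : 1 ≤ q) (hi : i < k) (hj : j < k - 1) :
    circOk (q * (k + 1) + 1) q (edgeColor q k i j) (xColor q k i) := by
  unfold edgeColor xColor
  split_ifs <;> apply circOk_levelColor' hq <;> omega

theorem circOk_edgeColor_yColor (hq : 1 ≤ q) (hi : i < k) (hj : j < k - 1) :
    circOk (q * (k + 1) + 1) q (edgeColor q k i j) (yColor q k) := by
  unfold edgeColor yColor
  split_ifs <;> apply circOk_levelColor' hq <;> omega

theorem xColor_last (hq : 1 ≤ q) (hk : 2 ≤ k) : xColor q k (k - 1) = q * k + 1 := by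
  have hqk : q * (k + 1) = q * k + q := by ring
  unfold xColor
  rw [if_neg (by omega), Nat.sub_add_cancel (by omega), levelColor_eq_of_lt (by omega)]

theorem xColor_zero (hq : 1 ≤ q) (hk : 2 ≤ k) : xColor q k 0 = q + 2 := by
  have hqk : q * 2 ≤ q * k := Nat.mul_le_mul_left q hk
  have hqk' : q * (k + 1) = q * k + q := by ring
  unfold xColor
  rw [if_pos (by omega), zero_add, levelColor_eq_of_lt (by omega), mul_one]

theorem circOk_zero_xColor_last (hq : 1 ≤ q) (hk : 2 ≤ k) :
    circOk (q * (k + 1) + 1) q 0 (xColor q k (k - 1)) := by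
  rw [← levelColor_zero_left (q := q) (k := k) (e := 0) (by omega)]
  unfold xColor
  split_ifs <;> apply circOk_levelColor' hq <;> omega

theorem circOk_zero_edgeColor_last (hq : 1 ≤ q) (hk : 2 ≤ k) (hj : j < k - 1) :
    circOk (q * (k + 1) + 1) q 0 (edgeColor q k (k - 1) j) := by
  rw [← levelColor_zero_left (q := q) (k := k) (e := 0) (by omega)]
  unfold edgeColor
  split_ifs <;> apply circOk_levelColor' hq <;> omega

theorem circOk_two_xColor_zero (hq : 1 ≤ q) (hk : 2 ≤ k) :
    circOk (q * (k + 1) + 1) q 2 (xColor q k 0) := by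
  rw [← levelColor_zero_left (q := q) (k := k) (e := 2) (by nlinarith)]
  unfold xColor
  split_ifs <;> apply circOk_levelColor' hq <;> omega

theorem circOk_two_edgeColor_zero (hq : 1 ≤ q) (hk : 2 ≤ k) (hj : j < k - 1) :
    circOk (q * (k + 1) + 1) q 2 (edgeColor q k 0 j) := by
  rw [← levelColor_zero_left (q := q) (k := k) (e := 2) (by nlinarith)]
  unfold edgeColor
  split_ifs <;> apply circOk_levelColor' hq <;> omega

end HalfEdgeColoring

open HalfEdgeColoring

/-- Lemma on `H_k = K_{k,k-1}` with two half-edge slots at `x_k` and `x_1`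
(here `x_1 = Sum.inl 0` and `x_k = Sum.inl (k-1)`). -/
theorem stmt13 (k q : ℕ) (hk : 2 ≤ k) (hq : 1 ≤ q) :
    ∃ (cv : Fin k ⊕ Fin (k - 1) → ℕ)
      (ce : (Fin k ⊕ Fin (k - 1)) → (Fin k ⊕ Fin (k - 1)) → ℕ),
      IsCircTotalColoring (completeBipartiteGraph (Fin k) (Fin (k - 1)))
        (q * (k + 1) + 1) q cv ce ∧
      cv (Sum.inl ⟨k - 1, by omega⟩) = q * k + 1 ∧
      cv (Sum.inl ⟨0, by omega⟩) = q + 2 ∧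
      circOk (q * (k + 1) + 1) q 0 (cv (Sum.inl ⟨k - 1, by omega⟩)) ∧
      (∀ j : Fin (k - 1),
        circOk (q * (k + 1) + 1) q 0 (ce (Sum.inl ⟨k - 1, by omega⟩) (Sum.inr j))) ∧
      circOk (q * (k + 1) + 1) q 2 (cv (Sum.inl ⟨0, by omega⟩)) ∧
      (∀ j : Fin (k - 1),
        circOk (q * (k + 1) + 1) q 2 (ce (Sum.inl ⟨0, by omega⟩) (Sum.inr j))) :=
  ⟨Sum.elim (fun i => xColor q k i) (fun _ => yColor q k),
    bipartiteEdgeColoring (fun i j => edgeColor q k i j),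
    isCircTotalColoring_completeBipartiteGraph (fun _ => levelColor_lt) (fun _ => levelColor_lt)
      (fun _ _ => edgeColor_lt) (fun i _ => circOk_xColor_yColor hq i.isLt)
      (fun i j j' hne => circOk_edgeColor_row hq i.isLt j.isLt j'.isLt (Fin.val_ne_of_ne hne))
      (fun i i' j hne => circOk_edgeColor_col hq i.isLt i'.isLt j.isLt (Fin.val_ne_of_ne hne))
      (fun i j => circOk_edgeColor_xColor hq i.isLt j.isLt)
      (fun i j => circOk_edgeColor_yColor hq i.isLt j.isLt),
    xColor_last hq hk, xColor_zero hq hk, circOk_zero_xColor_last hq hk,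
    fun j => circOk_zero_edgeColor_last hq hk j.isLt, circOk_two_xColor_zero hq hk,
    fun j => circOk_two_edgeColor_zero hq hk j.isLt⟩
end

section
/- Let k ≥ 4 and n ≥ 1. The graph G_{k,n} admits a (2n(k+1)+1, 2n)-total colouring; hence χ''_c(G_{k,n}) ≤ k + 1 + 1/(2n). -/
open SimpleGraph

theorem IsCircTotalColoring.of_incidence {V : Type*} {G : SimpleGraph V} {p q : ℕ}
    {cv : V → ℕ} {ce : V → V → ℕ} (hcv : ∀ v, cv v < p) (hce : ∀ u v, ce u v < p)
    (hcomm : ∀ u v, G.Adj u v → ce u v = ce v u)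
    (hadj : ∀ u v, G.Adj u v → circOk p q (cv u) (cv v))
    (hstar : ∀ u v w, G.Adj u v → G.Adj u w → v ≠ w → circOk p q (ce u v) (ce u w))
    (hinc : ∀ u v, G.Adj u v → circOk p q (ce u v) (cv u)) :
    IsCircTotalColoring G p q cv ce :=
  ⟨hcv, fun u v _ ↦ hce u v, hcomm, hadj, hstar,
    fun u v h ↦ ⟨hinc u v h, hcomm u v h ▸ hinc v u h.symm⟩⟩

theorem circTotalChromatic_le_div {V : Type*} {G : SimpleGraph V} {p q : ℕ} (hq : 0 < q)
    {cv : V → ℕ} {ce : V → V → ℕ} (h : IsCircTotalColoring G p q cv ce) :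
    circTotalChromatic G ≤ (p : ℝ) / q :=
  csInf_le ⟨0, by rintro x ⟨p, q, -, -, rfl⟩; positivity⟩ ⟨p, q, hq, ⟨cv, ce, h⟩, rfl⟩

def shade (q l r : ℕ) : ℕ := q * l + r

def ShadeGap (q K l₁ r₁ l₂ r₂ : ℕ) : Prop :=
  l₁ ≤ l₂ ∧ l₂ < K ∧ r₁ ≤ q ∧ r₂ ≤ q ∧ (l₂ = l₁ → r₁ + q ≤ r₂) ∧
    (l₂ = l₁ + 1 → r₁ ≤ r₂) ∧ (l₂ = l₁ + (K - 1) → r₂ ≤ r₁ + 1)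

theorem circOk_shade_of_gap {q K l₁ r₁ l₂ r₂ : ℕ} (hK : 3 ≤ K)
    (h : ShadeGap q K l₁ r₁ l₂ r₂) :
    circOk (q * K + 1) q (shade q l₁ r₁) (shade q l₂ r₂) := by
  obtain ⟨hl, hl₂, hr₁, hr₂, h₀, h₁, hK₁⟩ := h
  obtain ⟨d, rfl⟩ := Nat.exists_eq_add_of_le hl
  have hsplit : q * K = q * d + q * (K - d) := by
    rw [← Nat.mul_add]; congr 1; omega
  unfold circOk shade
  rw [Nat.mul_add, hsplit]
  rcases (by omega : d = 0 ∨ d = 1 ∨ (2 ≤ d ∧ d + 2 ≤ K) ∨ d + 1 = K) with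
    rfl | rfl | ⟨hd, hdK⟩ | hdK
  · have := h₀ rfl
    have : q * 2 ≤ q * (K - 0) := Nat.mul_le_mul_left q (by omega)
    omega
  · have := h₁ rfl
    have : q * 3 ≤ q * 1 + q * (K - 1) := by
      rw [← Nat.mul_add]; exact Nat.mul_le_mul_left q (by omega)
    omega
  · have : q * 2 ≤ q * d := Nat.mul_le_mul_left q hd
    have : q * 2 ≤ q * (K - d) := Nat.mul_le_mul_left q (by omega)
    omega
  · have := hK₁ (by omega)
    have : q * 2 ≤ q * d := Nat.mul_le_mul_left q (by omega)
    have : K - d = 1 := by omega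
    simp only [this, Nat.mul_one]
    omega

theorem circOk_shade {q K l₁ r₁ l₂ r₂ : ℕ} (hK : 3 ≤ K)
    (h : ShadeGap q K l₁ r₁ l₂ r₂ ∨ ShadeGap q K l₂ r₂ l₁ r₁) :
    circOk (q * K + 1) q (shade q l₁ r₁) (shade q l₂ r₂) :=
  h.elim (circOk_shade_of_gap hK) fun h ↦ (circOk_shade_of_gap hK h).symm

theorem shade_lt {q K l r : ℕ} (hl : l < K) (hr : r ≤ q) : shade q l r < q * K + 1 := by
  have : q * (l + 1) ≤ q * K := Nat.mul_le_mul_left q hl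
  unfold shade
  rw [Nat.mul_succ] at this
  omega

abbrev GknVertex (k n : ℕ) : Type := Option (Fin n × (Fin k ⊕ Fin (k - 1)))

def xColor (k n i a : ℕ) : ℕ :=
  if a = 0 then shade (2 * n) 0 (2 * i + 1)
  else if a = 1 then shade (2 * n) (k - 1) (2 * i)
  else shade (2 * n) (a - 1) (2 * i)

def yColor (k n i : ℕ) : ℕ := shade (2 * n) k (2 * i + 1)

def blockEdgeColor (k n i a b : ℕ) : ℕ :=
  if a = 0 then shade (2 * n) (b + 1) (2 * i + 1)
  else if a = 1 then shade (2 * n) b (2 * i)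
  else if a + b < k then shade (2 * n) (a + b) (2 * i + 1)
  else shade (2 * n) (a + b - k) (2 * i)

/-- In block `i` (counted from `0`) the vertex `x` (`a = 0`) lies on `e_{i+1}` and `x'` (`a = 1`) on
`e_i`; the edge `e_j` gets offset `2j`, so `e_n` has the shade `2nk + 2n` of level `k + 1`. -/
def chainEdgeColor (k n i a : ℕ) : ℕ := shade (2 * n) k (if a = 0 then 2 * i + 2 else 2 * i)

def gknVertexColor (k n : ℕ) : GknVertex k n → ℕ
  | none => shade (2 * n) 2 0
  | some (i, .inl a) => xColor k n i a
  | some (i, .inr _) => yColor k n i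

def gknEdgeColor (k n : ℕ) : GknVertex k n → GknVertex k n → ℕ
  | some (i, .inl a), some (_, .inr b) => blockEdgeColor k n i a b
  | some (_, .inr b), some (i, .inl a) => blockEdgeColor k n i a b
  | some (i, .inl a), _ => chainEdgeColor k n i a
  | none, some (i, .inl a) => chainEdgeColor k n i a
  | _, _ => 0

/-- `v` is the neighbour of `(i, inl a)` outside block `i`. -/
def IsChainNbr {k n : ℕ} (i : Fin n) (a : Fin k) : GknVertex k n → Prop
  | none => (a : ℕ) = 0 ∧ (i : ℕ) = n - 1 ∨ (a : ℕ) = 1 ∧ (i : ℕ) = 0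
  | some (j, .inl a') =>
      (a : ℕ) = 0 ∧ (a' : ℕ) = 1 ∧ (j : ℕ) = i + 1 ∨ (a : ℕ) = 1 ∧ (a' : ℕ) = 0 ∧ (i : ℕ) = j + 1
  | some (_, .inr _) => False

section Gkn

variable {k n : ℕ}

theorem gkn_adj_none {v : GknVertex k n} (h : (Gkn k n).Adj none v) :
    ∃ i a, v = some (i, .inl a) ∧ IsChainNbr i a none := by
  simp only [Gkn, fromRel_adj] at h
  aesop (add norm IsChainNbr)

theorem gkn_adj_inr {i : Fin n} {b : Fin (k - 1)} {v : GknVertex k n}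
    (h : (Gkn k n).Adj (some (i, .inr b)) v) : ∃ a, v = some (i, .inl a) := by
  simp only [Gkn, fromRel_adj] at h
  aesop

theorem gkn_adj_inl {i : Fin n} {a : Fin k} {v : GknVertex k n}
    (h : (Gkn k n).Adj (some (i, .inl a)) v) : (∃ b, v = some (i, .inr b)) ∨ IsChainNbr i a v := by
  simp only [Gkn, fromRel_adj] at h
  aesop (add norm IsChainNbr)

theorem IsChainNbr.val_le_one {i : Fin n} {a : Fin k} {v : GknVertex k n}
    (h : IsChainNbr i a v) : (a : ℕ) ≤ 1 := by
  rcases v with _ | ⟨j, a' | b⟩ <;> simp only [IsChainNbr] at h <;> omega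

theorem IsChainNbr.unique {i : Fin n} {a : Fin k} {v w : GknVertex k n}
    (hv : IsChainNbr i a v) (hw : IsChainNbr i a w) : v = w := by
  rcases v with _ | ⟨j, a' | b⟩ <;> rcases w with _ | ⟨j', a'' | b'⟩ <;>
    simp only [IsChainNbr, Option.some.injEq, Prod.mk.injEq, Sum.inl.injEq, reduceCtorEq]
      at hv hw ⊢ <;> omega

theorem gknVertexColor_lt (hk : 4 ≤ k) (v : GknVertex k n) :
    gknVertexColor k n v < 2 * n * (k + 1) + 1 := by
  rcases v with _ | ⟨i, a | b⟩ <;> simp only [gknVertexColor, xColor, yColor] <;>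
    (try split_ifs) <;> apply shade_lt <;> omega

theorem gknEdgeColor_lt (u v : GknVertex k n) :
    gknEdgeColor k n u v < 2 * n * (k + 1) + 1 := by
  rcases u with _ | ⟨i, a | b⟩ <;> rcases v with _ | ⟨j, a' | b'⟩ <;>
    simp only [gknEdgeColor, blockEdgeColor, chainEdgeColor] <;>
    (try split_ifs) <;> first | omega | apply shade_lt <;> omega

theorem gknEdgeColor_of_isChainNbr {i : Fin n} {a : Fin k}
    {v : GknVertex k n} (h : IsChainNbr i a v) :
    gknEdgeColor k n (some (i, .inl a)) v = chainEdgeColor k n i a := by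
  rcases v with _ | ⟨j, a' | b⟩
  · rfl
  · rfl
  · exact h.elim

theorem gknEdgeColor_comm {u v : GknVertex k n} (h : (Gkn k n).Adj u v) :
    gknEdgeColor k n u v = gknEdgeColor k n v u := by
  rcases u with _ | ⟨i, a | b⟩
  · obtain ⟨i, a, rfl, -⟩ := gkn_adj_none h
    rfl
  · rcases gkn_adj_inl h with ⟨b, rfl⟩ | hv
    · rfl
    rcases v with _ | ⟨j, a' | b⟩
    · rfl
    · simp only [gknEdgeColor, chainEdgeColor, IsChainNbr] at hv ⊢
      congr 1
      split_ifs <;> omega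
    · exact hv.elim
  · obtain ⟨a, rfl⟩ := gkn_adj_inr h
    rfl

theorem circOk_gknVertexColor_of_adj (hk : 4 ≤ k) {u v : GknVertex k n}
    (h : (Gkn k n).Adj u v) :
    circOk (2 * n * (k + 1) + 1) (2 * n) (gknVertexColor k n u) (gknVertexColor k n v) := by
  rcases u with _ | ⟨i, a | b⟩
  · obtain ⟨i, a, rfl, hv⟩ := gkn_adj_none h
    simp only [IsChainNbr] at hv
    simp only [gknVertexColor, xColor]
    split_ifs <;> exact circOk_shade (by omega) (by unfold ShadeGap; omega)
  · rcases gkn_adj_inl h with ⟨b, rfl⟩ | hv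
    · simp only [gknVertexColor, xColor, yColor]
      split_ifs <;> exact circOk_shade (by omega) (by unfold ShadeGap; omega)
    rcases v with _ | ⟨j, a' | b⟩ <;> simp only [IsChainNbr] at hv <;>
      simp only [gknVertexColor, xColor] <;>
      split_ifs <;> exact circOk_shade (by omega) (by unfold ShadeGap; omega)
  · obtain ⟨a, rfl⟩ := gkn_adj_inr h
    simp only [gknVertexColor, xColor, yColor]
    split_ifs <;> exact circOk_shade (by omega) (by unfold ShadeGap; omega)

theorem circOk_gknEdgeColor_gknVertexColor (hk : 4 ≤ k)
    {u v : GknVertex k n} (h : (Gkn k n).Adj u v) :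
    circOk (2 * n * (k + 1) + 1) (2 * n) (gknEdgeColor k n u v) (gknVertexColor k n u) := by
  rcases u with _ | ⟨i, a | b⟩
  · obtain ⟨i, a, rfl, hv⟩ := gkn_adj_none h
    simp only [IsChainNbr] at hv
    simp only [gknEdgeColor, gknVertexColor, chainEdgeColor]
    split_ifs <;> exact circOk_shade (by omega) (by unfold ShadeGap; omega)
  · rcases gkn_adj_inl h with ⟨b, rfl⟩ | hv
    · simp only [gknEdgeColor, gknVertexColor, blockEdgeColor, xColor]
      split_ifs <;> exact circOk_shade (by omega) (by unfold ShadeGap; omega)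
    have := hv.val_le_one
    rw [gknEdgeColor_of_isChainNbr hv]
    simp only [gknVertexColor, chainEdgeColor, xColor]
    split_ifs <;> exact circOk_shade (by omega) (by unfold ShadeGap; omega)
  · obtain ⟨a, rfl⟩ := gkn_adj_inr h
    simp only [gknEdgeColor, gknVertexColor, blockEdgeColor, yColor]
    split_ifs <;> exact circOk_shade (by omega) (by unfold ShadeGap; omega)

theorem circOk_gknEdgeColor_of_adj (hk : 4 ≤ k)
    {u v w : GknVertex k n} (huv : (Gkn k n).Adj u v)
    (huw : (Gkn k n).Adj u w) (hvw : v ≠ w) :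
    circOk (2 * n * (k + 1) + 1) (2 * n) (gknEdgeColor k n u v) (gknEdgeColor k n u w) := by
  rcases u with _ | ⟨i, a | b⟩
  · obtain ⟨i, a, rfl, hv⟩ := gkn_adj_none huv
    obtain ⟨i', a', rfl, hw⟩ := gkn_adj_none huw
    simp only [IsChainNbr] at hv hw
    have : (a : ℕ) ≠ a' := by
      rintro haa; apply hvw
      simp only [Option.some.injEq, Prod.mk.injEq, Sum.inl.injEq]; omega
    simp only [gknEdgeColor, chainEdgeColor]
    split_ifs <;> exact circOk_shade (by omega) (by unfold ShadeGap; omega)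
  · rcases gkn_adj_inl huv with ⟨b, rfl⟩ | hv <;> rcases gkn_adj_inl huw with ⟨b', rfl⟩ | hw
    · have : (b : ℕ) ≠ b' := fun hbb ↦ hvw (by rw [Fin.ext hbb])
      simp only [gknEdgeColor, blockEdgeColor]
      split_ifs <;> exact circOk_shade (by omega) (by unfold ShadeGap; omega)
    · have := hw.val_le_one
      rw [gknEdgeColor_of_isChainNbr hw]
      simp only [gknEdgeColor, blockEdgeColor, chainEdgeColor]
      split_ifs <;> exact circOk_shade (by omega) (by unfold ShadeGap; omega)
    · have := hv.val_le_one
      rw [gknEdgeColor_of_isChainNbr hv]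
      simp only [gknEdgeColor, blockEdgeColor, chainEdgeColor]
      split_ifs <;> exact circOk_shade (by omega) (by unfold ShadeGap; omega)
    · exact absurd (hv.unique hw) hvw
  · obtain ⟨a, rfl⟩ := gkn_adj_inr huv
    obtain ⟨a', rfl⟩ := gkn_adj_inr huw
    have : (a : ℕ) ≠ a' := fun haa ↦ hvw (by rw [Fin.ext haa])
    simp only [gknEdgeColor, blockEdgeColor]
    split_ifs <;> exact circOk_shade (by omega) (by unfold ShadeGap; omega)

theorem isCircTotalColoring_gkn (hk : 4 ≤ k) :
    IsCircTotalColoring (Gkn k n) (2 * n * (k + 1) + 1) (2 * n)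
      (gknVertexColor k n) (gknEdgeColor k n) :=
  .of_incidence (gknVertexColor_lt hk) gknEdgeColor_lt (fun _ _ ↦ gknEdgeColor_comm)
    (fun _ _ ↦ circOk_gknVertexColor_of_adj hk) (fun _ _ _ ↦ circOk_gknEdgeColor_of_adj hk)
    (fun _ _ ↦ circOk_gknEdgeColor_gknVertexColor hk)

end Gkn

theorem stmt14 (k n : ℕ) (hk : 4 ≤ k) (hn : 1 ≤ n) :
    (∃ cv ce, IsCircTotalColoring (Gkn k n) (2 * n * (k + 1) + 1) (2 * n) cv ce) ∧
    circTotalChromatic (Gkn k n) ≤ (k : ℝ) + 1 + 1 / (2 * n) := by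
  have hcol := isCircTotalColoring_gkn (n := n) hk
  refine ⟨⟨_, _, hcol⟩, (circTotalChromatic_le_div (by omega) hcol).trans_eq ?_⟩
  have : (n : ℝ) ≠ 0 := by positivity
  push_cast
  field_simp
end

section
/- If n is odd, then the graph G_{k,n} is bipartite. -/
open SimpleGraph

/-- Every edge of `G_{k,n}` joins consecutive levels except `u x'_1`, which spans `n` levels;
so for odd `n` the parity of the level is a proper 2-colouring. -/
def gknLevel {k n : ℕ} : Option (Fin n × (Fin k ⊕ Fin (k - 1))) → ℕ
  | none => n
  | some (i, Sum.inl _) => i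
  | some (i, Sum.inr _) => i + 1

lemma gknLevel_mod_two_ne_of_adj {k n : ℕ} (hn : Odd n)
    {a b : Option (Fin n × (Fin k ⊕ Fin (k - 1)))} (hab : (Gkn k n).Adj a b) :
    gknLevel a % 2 ≠ gknLevel b % 2 := by
  obtain ⟨m, rfl⟩ := hn
  rw [Gkn, fromRel_adj] at hab
  rcases hab.2 with h | h <;>
  rcases h with ⟨i, x, y, rfl, rfl⟩ | ⟨i, j, x, x', hj, -, -, rfl, rfl⟩ |
    ⟨i, x', hi, -, rfl, rfl⟩ | ⟨i, x, hi, -, rfl, rfl⟩ <;>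
  simp only [gknLevel] <;> omega

theorem stmt18_general (k n : ℕ) (hn : Odd n) :
    (Gkn k n).Colorable 2 := by
  have parityColoring : (Gkn k n).Coloring (ZMod 2) :=
    Coloring.mk (fun v => (gknLevel v : ZMod 2)) fun hab => by
      rw [ne_eq, ZMod.natCast_eq_natCast_iff']
      exact gknLevel_mod_two_ne_of_adj hn hab
  simpa using parityColoring.colorable

theorem stmt18 (k n : ℕ) (hk : 2 ≤ k) (hn : Odd n) :
    (Gkn k n).Colorable 2 :=
  stmt18_general k n hn
end
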